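/- Let u, v, u′, v′ be imaginary octonions with N(u) = N(v) = N(u′) = N(v′) = 1, ⟨u,v⟩ = 0, ⟨u′,v′⟩ = 0, and uv = u′v′. Define the ℝ-linear map T : 𝕆 → 𝕆 by T(x) = ⟨u,x⟩v − ⟨v,x⟩u − ⟨u′,x⟩v′ + ⟨v′,x⟩u′ (the difference of the rotation generators in the (u,v)- and (u′,v′)-planes). Then T is a derivation of the octonions: T(xy) = T(x)y + x·T(y) for all x, y ∈ 𝕆. (This expresses that the elements A_p and G_p built from pairs of units with a common product lie in g₂ = der(𝕆).) -/

import Mathlib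

noncomputable section

abbrev H := Quaternion ℝ

/-- The octonions 𝕆, as the Cayley–Dickson double of the quaternions:
pairs (a,b) of quaternions. -/
def Oct : Type := H × H

namespace Oct

instance : AddCommGroup Oct := inferInstanceAs (AddCommGroup (H × H))
instance : Module ℝ Oct := inferInstanceAs (Module ℝ (H × H))

def mk' (a b : H) : Oct := (a, b)
def fst : Oct → H := Prod.fst
def snd : Oct → H := Prod.snd

/-- Cayley–Dickson multiplication: (a,b)·(c,d) = (ac − conj(d)b, da + b·conj(c)). -/
instance : Mul Oct :=
  ⟨fun p q => mk' (p.fst * q.fst - star q.snd * p.snd) (q.snd * p.fst + p.snd * star q.fst)⟩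

instance : One Oct := ⟨mk' 1 0⟩

/-- Octonionic conjugation: conj (a,b) = (conj a, −b). -/
def conj (p : Oct) : Oct := mk' (star p.fst) (-p.snd)

/-- The real part of an octonion, as a real scalar. -/
def re (p : Oct) : ℝ := (p.fst).re

/-- The bilinear form ⟨x,y⟩ = (x·conj(y) + y·conj(x))/2, a real scalar. -/
def oinner (p q : Oct) : ℝ := re (p * conj q + q * conj p) / 2

/-- The norm N(x) = x·conj(x), a real scalar. -/
def N (p : Oct) : ℝ := re (p * conj p)

/-- An octonion is imaginary if conj x = −x. -/
def IsIm (p : Oct) : Prop := conj p = -p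

/-- The embedding of the reals into the octonions. -/
def oR (r : ℝ) : Oct := mk' (algebraMap ℝ H r) 0

end Oct

open Oct

/-! For imaginary `u v`, the rotation generator `rot u v` differs from a derivation by
`(1/6) ad (u * v)`, a term depending on `u, v` only through their product. Hence the difference
of two rotation generators whose planes have the same product is a difference of derivations. -/

namespace Oct

@[ext] lemma ext {p q : Oct} (h₁ : p.fst = q.fst) (h₂ : p.snd = q.snd) : p = q := Prod.ext h₁ h₂

section Components

variable (p q : Oct) (r : ℝ)

lemma fst_add : (p + q).fst = p.fst + q.fst := rfl
lemma snd_add : (p + q).snd = p.snd + q.snd := rfl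
lemma fst_sub : (p - q).fst = p.fst - q.fst := rfl
lemma snd_sub : (p - q).snd = p.snd - q.snd := rfl
lemma fst_smul : (r • p).fst = r • p.fst := rfl
lemma snd_smul : (r • p).snd = r • p.snd := rfl
lemma fst_mul : (p * q).fst = p.fst * q.fst - star q.snd * p.snd := rfl
lemma snd_mul : (p * q).snd = q.snd * p.fst + p.snd * star q.fst := rfl
lemma fst_conj : (conj p).fst = star p.fst := rfl
lemma snd_conj : (conj p).snd = -p.snd := rfl
lemma re_def : re p = p.fst.re := rfl

end Components

lemma sub_mul (p q r : Oct) : (p - q) * r = p * r - q * r := by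
  ext <;> simp only [fst_mul, snd_mul, fst_sub, snd_sub] <;> noncomm_ring

lemma mul_sub (p q r : Oct) : p * (q - r) = p * q - p * r := by
  ext <;> simp only [fst_mul, snd_mul, fst_sub, snd_sub, star_sub] <;> noncomm_ring

lemma IsIm.re_eq_zero {p : Oct} (hp : IsIm p) : p.fst.re = 0 := by
  have h : (star p.fst).re = (-p.fst).re := congrArg (fun q : Oct => q.fst.re) hp
  rw [Quaternion.re_star, Quaternion.re_neg] at h
  linarith

def rot (u v x : Oct) : Oct := oinner u x • v - oinner v x • u

def ad (a x : Oct) : Oct := a * x - x * a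

def IsDerivation (D : Oct → Oct) : Prop := ∀ x y, D (x * y) = D x * y + x * D y

lemma IsDerivation.sub {D E : Oct → Oct} (hD : IsDerivation D) (hE : IsDerivation E) :
    IsDerivation (fun x => D x - E x) := by
  intro x y
  simp only [hD x y, hE x y, sub_mul, mul_sub]
  abel

set_option maxHeartbeats 1000000 in
/-- The constant `1/6` is the coefficient of the orthogonal projection of `rot u v ∈ 𝔰𝔬(7)`
onto the complement `{ad w}` of `𝔤₂`. -/
theorem isDerivation_rot_sub_ad {u v : Oct} (hu : IsIm u) (hv : IsIm v) :
    IsDerivation (fun x => rot u v x - (6 : ℝ)⁻¹ • ad (u * v) x) := by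
  intro x y
  have hu0 := hu.re_eq_zero
  have hv0 := hv.re_eq_zero
  ext <;>
    simp only [rot, ad, oinner, re_def, fst_add, snd_add, fst_sub, snd_sub, fst_smul, snd_smul,
      fst_mul, snd_mul, fst_conj, snd_conj, Quaternion.re_mul, Quaternion.imI_mul,
      Quaternion.imJ_mul, Quaternion.imK_mul, Quaternion.re_star, Quaternion.imI_star,
      Quaternion.imJ_star, Quaternion.imK_star, Quaternion.re_neg, Quaternion.imI_neg,
      Quaternion.imJ_neg, Quaternion.imK_neg, Quaternion.re_add, Quaternion.imI_add,
      Quaternion.imJ_add, Quaternion.imK_add, Quaternion.re_sub, Quaternion.imI_sub,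
      Quaternion.imJ_sub, Quaternion.imK_sub, Quaternion.re_smul, Quaternion.imI_smul,
      Quaternion.imJ_smul, Quaternion.imK_smul, smul_eq_mul, hu0, hv0] <;>
    ring

end Oct

theorem rotation_difference_is_derivation_general (u v u' v' : Oct)
    (hu : IsIm u) (hv : IsIm v) (hu' : IsIm u') (hv' : IsIm v')
    (hprod : u * v = u' * v')
    (T : Oct → Oct)
    (hT : ∀ x, T x = oinner u x • v - oinner v x • u
                    - oinner u' x • v' + oinner v' x • u') :
    ∀ x y : Oct, T (x * y) = T x * y + x * T y := by
  have hT_eq : T = fun x => (rot u v x - (6 : ℝ)⁻¹ • ad (u * v) x)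
      - (rot u' v' x - (6 : ℝ)⁻¹ • ad (u' * v') x) := by
    funext x
    rw [hT, hprod, rot, rot]
    abel
  subst hT_eq
  exact (isDerivation_rot_sub_ad hu hv).sub (isDerivation_rot_sub_ad hu' hv')

/-- Let u, v, u′, v′ be imaginary octonions with N(u) = N(v) = N(u′) = N(v′) = 1,
⟨u,v⟩ = 0, ⟨u′,v′⟩ = 0, and uv = u′v′.  Define T : 𝕆 → 𝕆 by
T(x) = ⟨u,x⟩v − ⟨v,x⟩u − ⟨u′,x⟩v′ + ⟨v′,x⟩u′ (the difference of the rotation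
generators in the (u,v)- and (u′,v′)-planes).  Then T is a derivation of the
octonions: T(xy) = T(x)y + x·T(y) for all x, y ∈ 𝕆. -/
theorem rotation_difference_is_derivation (u v u' v' : Oct)
    (hu : IsIm u) (hv : IsIm v) (hu' : IsIm u') (hv' : IsIm v')
    (nu : N u = 1) (nv : N v = 1) (nu' : N u' = 1) (nv' : N v' = 1)
    (huv : oinner u v = 0) (huv' : oinner u' v' = 0)
    (hprod : u * v = u' * v')
    (T : Oct → Oct)
    (hT : ∀ x, T x = oinner u x • v - oinner v x • u
                    - oinner u' x • v' + oinner v' x • u') :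
    ∀ x y : Oct, T (x * y) = T x * y + x * T y :=
  rotation_difference_is_derivation_general u v u' v' hu hv hu' hv' hprod T hT
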